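/- (Light aberration, angle form.) Let u, u′ be observers and F a frequency vector in Minkowski space, with F = ν(u + w) = ν′(u′ + w′), where w ∈ u^⊥, w′ ∈ u′^⊥ are the relative velocities of the light ray observed by u, u′, and u′ = γ(u + v) with v ∈ u^⊥, v ≠ 0. Let cos θ = g(−w, v)/‖v‖, let P = π_{u′^⊥}(v) be the projection of v onto u′^⊥, and let cos θ′ = g(−w′, P)/‖P‖. Then P ≠ 0 and cos θ = (cos θ′ − ‖v‖)/(1 − ‖v‖ cos θ′). This is the pointwise content of the paper's generalized aberration formula (equation (abegen2) of Proposition 2). -/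

import Mathlib

/-!
Pair the frequency vector `F = ν (u + w) = ν' (u' + w')` with `u'` and with `v`. The first
pairing is the Doppler formula `ν' = ν γ (1 - g(w, v))`; the second gives
`ν g(w, v) = ν' (γ ‖v‖² + g(w', v))`. Since `w' ⊥ u'`, projecting `v` onto `u'^⊥` does not
change `g(w', v)`, and `‖P‖ = γ ‖v‖`. Together with `γ² (1 - ‖v‖²) = 1` this becomes the
relativistic addition law `cos θ' = (cos θ + ‖v‖) / (1 + ‖v‖ cos θ)`, which is then inverted.
-/

noncomputable section

/-- The Minkowski bilinear form on ℝ⁴ (signature (−,+,+,+)). -/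
def g (x y : Fin 4 → ℝ) : ℝ :=
  -(x 0 * y 0) + x 1 * y 1 + x 2 * y 2 + x 3 * y 3

/-- An observer: a future-pointing timelike unit vector. -/
def IsObserver (u : Fin 4 → ℝ) : Prop := g u u = -1 ∧ 0 < u 0

/-- A frequency vector: a future-pointing lightlike vector. -/
def IsFrequencyVector (F : Fin 4 → ℝ) : Prop := F ≠ 0 ∧ g F F = 0 ∧ 0 < F 0

/-- The g-orthogonal projection of `x` onto `u'^⊥`. -/
def proj (u' x : Fin 4 → ℝ) : Fin 4 → ℝ := x + g x u' • u'

section Minkowski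

variable {u u' v w y : Fin 4 → ℝ}

lemma g_comm (x y : Fin 4 → ℝ) : g x y = g y x := by
  simp only [g]; ring

@[simp]
lemma g_add_left (x y z : Fin 4 → ℝ) : g (x + y) z = g x z + g y z := by
  simp only [g, Pi.add_apply]; ring

@[simp]
lemma g_add_right (x y z : Fin 4 → ℝ) : g x (y + z) = g x y + g x z := by
  simp only [g, Pi.add_apply]; ring

@[simp]
lemma g_smul_left (a : ℝ) (x y : Fin 4 → ℝ) : g (a • x) y = a * g x y := by
  simp only [g, Pi.smul_apply, smul_eq_mul]; ring

@[simp]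
lemma g_smul_right (a : ℝ) (x y : Fin 4 → ℝ) : g x (a • y) = a * g x y := by
  simp only [g, Pi.smul_apply, smul_eq_mul]; ring

@[simp]
lemma g_neg_left (x y : Fin 4 → ℝ) : g (-x) y = -g x y := by
  simp only [g, Pi.neg_apply]; ring

@[simp]
lemma g_zero_left (y : Fin 4 → ℝ) : g 0 y = 0 := by
  simp [g]

lemma g_self_pos_of_orthogonal (hu : g u u < 0) (hv : g u v = 0) (hv0 : v ≠ 0) :
    0 < g v v := by
  simp only [g] at hu hv ⊢
  have hspatial : v 1 ≠ 0 ∨ v 2 ≠ 0 ∨ v 3 ≠ 0 := by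
    by_contra! h
    obtain ⟨h1, h2, h3⟩ := h
    have hu0 : u 0 ≠ 0 := fun h0 => by
      nlinarith [sq_nonneg (u 1), sq_nonneg (u 2), sq_nonneg (u 3)]
    have h0 : v 0 = 0 := by
      simp only [h1, h2, h3, mul_zero, add_zero] at hv
      simpa [hu0] using hv
    exact hv0 (funext fun i => by fin_cases i <;> assumption)
  have hpos : 0 < v 1 ^ 2 + v 2 ^ 2 + v 3 ^ 2 := by
    rcases hspatial with h | h | h <;> positivity
  -- Cauchy–Schwarz on the spatial parts: `(u₀ v₀)² ≤ |ū|² |v̄|² < u₀² |v̄|²`.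
  have hcs : (u 0 * v 0) ^ 2 ≤ (u 1 ^ 2 + u 2 ^ 2 + u 3 ^ 2) * (v 1 ^ 2 + v 2 ^ 2 + v 3 ^ 2) := by
    have hdot : u 0 * v 0 = u 1 * v 1 + u 2 * v 2 + u 3 * v 3 := by linarith
    rw [hdot]
    nlinarith [sq_nonneg (u 1 * v 2 - u 2 * v 1), sq_nonneg (u 1 * v 3 - u 3 * v 1),
      sq_nonneg (u 2 * v 3 - u 3 * v 2)]
  nlinarith

-- Reverse Cauchy–Schwarz inequality.
lemma IsObserver.neg_g_pos (hu : IsObserver u) (hu' : IsObserver u') : 0 < -g u u' := by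
  obtain ⟨huu, h0⟩ := hu
  obtain ⟨hu'u', h0'⟩ := hu'
  simp only [g] at *
  nlinarith [sq_nonneg (u 1 * u' 2 - u 2 * u' 1), sq_nonneg (u 1 * u' 3 - u 3 * u' 1),
    sq_nonneg (u 2 * u' 3 - u 3 * u' 2), mul_pos h0 h0',
    sq_nonneg (u 1 * u' 1 + u 2 * u' 2 + u 3 * u' 3 - u 0 * u' 0),
    sq_nonneg (u 1 * u' 1 + u 2 * u' 2 + u 3 * u' 3 + u 0 * u' 0)]

lemma g_proj_self (hu' : g u' u' = -1) (x : Fin 4 → ℝ) :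
    g (proj u' x) (proj u' x) = g x x + g x u' ^ 2 := by
  simp only [proj, g_add_left, g_add_right, g_smul_left, g_smul_right, hu', g_comm u' x]
  ring

lemma g_proj_of_orthogonal (hy : g y u' = 0) (x : Fin 4 → ℝ) : g y (proj u' x) = g y x := by
  simp [proj, hy]

lemma sq_mul_one_sub_g_self (hu : g u u = -1) (hu' : g u' u' = -1) (hv : g u v = 0)
    {γ : ℝ} (hu'v : u' = γ • (u + v)) : γ ^ 2 * (1 - g v v) = 1 := by
  have h := hu'
  simp only [hu'v, g_add_left, g_add_right, g_smul_left, g_smul_right, hu, hv, g_comm v u] at h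
  linear_combination -h

lemma neg_g_smul_add (hu : g u u = -1) (hv : g u v = 0) (hw : g u w = 0) (ν γ : ℝ) :
    -g (ν • (u + w)) (γ • (u + v)) = ν * γ * (1 - g w v) := by
  simp only [g_smul_left, g_smul_right, g_add_left, g_add_right, hu, hv, g_comm w u, hw]
  ring

end Minkowski

lemma eq_div_of_eq_add_div_one_add {c c' s : ℝ} (hcs : 1 + c * s ≠ 0) (hs : s ^ 2 ≠ 1)
    (h : c' = (c + s) / (1 + c * s)) : c = (c' - s) / (1 - s * c') := by
  have hden : 1 - s * c' = (1 - s ^ 2) / (1 + c * s) := by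
    rw [h, eq_div_iff hcs, sub_mul, mul_assoc, div_mul_cancel₀ _ hcs]; ring
  have hs' : 1 - s ^ 2 ≠ 0 := sub_ne_zero.mpr (Ne.symm hs)
  rw [hden, h, eq_div_iff (div_ne_zero hs' hcs)]
  field_simp
  ring

lemma aberration_of_doppler {ν ν' γ s a b : ℝ} (hν : ν ≠ 0) (hs : 0 < s) (ha : 1 - a ≠ 0)
    (hγs : γ ^ 2 * (1 - s ^ 2) = 1) (hdoppler : ν' = ν * γ * (1 - a))
    (hpair : ν * a = ν' * (γ * s ^ 2 + b)) :
    -b / (γ * s) = (-a / s + s) / (1 + -a / s * s) := by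
  have hγ : γ ≠ 0 := by rintro rfl; simp at hγs
  have hb : b * (1 - a) = γ * (a - s ^ 2) := by
    apply mul_left_cancel₀ (mul_ne_zero hν hγ)
    rw [hdoppler] at hpair
    linear_combination -hpair - ν * a * hγs
  rw [div_mul_cancel₀ _ hs.ne', ← sub_eq_add_neg, div_eq_div_iff (mul_ne_zero hγ hs.ne') ha]
  field_simp
  linear_combination -hb

theorem aberration_angle_general (u u' F v w w' : Fin 4 → ℝ) (ν ν' γ : ℝ)
    (hu : IsObserver u) (hu' : IsObserver u')
    (hν' : ν' = -(g F u'))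
    (hνpos : 0 < ν) (hν'pos : 0 < ν')
    (hw : g u w = 0) (hFw : F = ν • (u + w))
    (hw' : g u' w' = 0) (hFw' : F = ν' • (u' + w'))
    (hv : g u v = 0) (hγ : γ = -(g u u')) (hu'v : u' = γ • (u + v))
    (hvne : v ≠ 0) :
    proj u' v ≠ 0 ∧
    g (-w) v / Real.sqrt (g v v) =
      (g (-w') (proj u' v) / Real.sqrt (g (proj u' v) (proj u' v))
          - Real.sqrt (g v v)) /
      (1 - Real.sqrt (g v v) *
          (g (-w') (proj u' v) / Real.sqrt (g (proj u' v) (proj u' v)))) := by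
  have hγpos : 0 < γ := hγ ▸ hu.neg_g_pos hu'
  have hvv : 0 < g v v := g_self_pos_of_orthogonal (by rw [hu.1]; norm_num) hv hvne
  set s := √(g v v)
  have hs : 0 < s := Real.sqrt_pos.2 hvv
  have hss : s ^ 2 = g v v := Real.sq_sqrt hvv.le
  have hγs : γ ^ 2 * (1 - s ^ 2) = 1 := hss ▸ sq_mul_one_sub_g_self hu.1 hu'.1 hv hu'v
  have hvu' : g v u' = γ * s ^ 2 := by
    simp only [hss, hu'v, g_smul_right, g_add_right, g_comm v u, hv, zero_add]
  have hP : √(g (proj u' v) (proj u' v)) = γ * s := by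
    rw [g_proj_self hu'.1, hvu', ← hss,
      show s ^ 2 + (γ * s ^ 2) ^ 2 = (γ * s) ^ 2 by linear_combination (-s ^ 2) * hγs]
    exact Real.sqrt_sq (by positivity)
  have hdoppler : ν' = ν * γ * (1 - g w v) := by
    rw [hν', hFw, hu'v, neg_g_smul_add hu.1 hv hw]
  have ha : 1 - g w v ≠ 0 := by rintro h; rw [h, mul_zero] at hdoppler; exact hν'pos.ne' hdoppler
  have hpair : ν * g w v = ν' * (γ * s ^ 2 + g w' v) := by
    have h := congrArg (g · v) (hFw.symm.trans hFw')
    simp only [g_smul_left, g_add_left, hv, g_comm u' v, hvu', zero_add] at h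
    exact h
  refine ⟨fun h0 => (mul_pos hγpos hs).ne' ?_, ?_⟩
  · rw [← hP, h0, g_zero_left, Real.sqrt_zero]
  rw [g_neg_left, g_neg_left, g_proj_of_orthogonal (by rw [g_comm, hw']), hP]
  refine eq_div_of_eq_add_div_one_add ?_ (fun h => by simp [h] at hγs)
    (aberration_of_doppler hνpos.ne' hs ha hγs hdoppler hpair)
  rwa [div_mul_cancel₀ _ hs.ne', ← sub_eq_add_neg]

/-- Light aberration, angle form: with `cos θ = g(−w,v)/‖v‖`,
`P = π_{u'^⊥}(v)` and `cos θ' = g(−w',P)/‖P‖`, one has `P ≠ 0` and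
`cos θ = (cos θ' − ‖v‖)/(1 − ‖v‖ cos θ')`. -/
theorem aberration_angle (u u' F v w w' : Fin 4 → ℝ) (ν ν' γ : ℝ)
    (hu : IsObserver u) (hu' : IsObserver u') (hF : IsFrequencyVector F)
    (hν : ν = -(g F u)) (hν' : ν' = -(g F u'))
    (hνpos : 0 < ν) (hν'pos : 0 < ν')
    (hw : g u w = 0) (hFw : F = ν • (u + w))
    (hw' : g u' w' = 0) (hFw' : F = ν' • (u' + w'))
    (hv : g u v = 0) (hγ : γ = -(g u u')) (hu'v : u' = γ • (u + v))
    (hvne : v ≠ 0) :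
    proj u' v ≠ 0 ∧
    g (-w) v / Real.sqrt (g v v) =
      (g (-w') (proj u' v) / Real.sqrt (g (proj u' v) (proj u' v))
          - Real.sqrt (g v v)) /
      (1 - Real.sqrt (g v v) *
          (g (-w') (proj u' v) / Real.sqrt (g (proj u' v) (proj u' v)))) :=
  aberration_angle_general u u' F v w w' ν ν' γ hu hu' hν' hνpos hν'pos hw hFw hw' hFw' hv hγ hu'v
    hvne
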